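/- For a pseudo self-concordant function f with parameter R and any positive semidefinite J, the normalized Hessian is locally Lipschitz: for all x₁, x₂, x⋆ ∈ ℝ^p, ‖J^{1/2}(∇²f(x₂) − ∇²f(x₁))J^{1/2}‖₂ ≤ R · e^{R·max(‖x₁−x⋆‖₂, ‖x₂−x⋆‖₂)} · ‖J^{1/2}∇²f(x⋆)J^{1/2}‖₂ · ‖x₂−x₁‖₂. -/

import Mathlib

open Matrix

/-- Spectral (operator) norm of a real square matrix. -/
noncomputable def specNorm {p : ℕ} (A : Matrix (Fin p) (Fin p) ℝ) : ℝ :=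
  ‖Matrix.toEuclideanCLM (𝕜 := ℝ) A‖

/-- Hessian matrix of `f : ℝ^p → ℝ` at `x`, in the standard basis. -/
noncomputable def hessMat {p : ℕ} (f : EuclideanSpace ℝ (Fin p) → ℝ)
    (x : EuclideanSpace ℝ (Fin p)) : Matrix (Fin p) (Fin p) ℝ :=
  Matrix.of fun i j =>
    iteratedFDeriv ℝ 2 f x ![EuclideanSpace.single i (1 : ℝ), EuclideanSpace.single j (1 : ℝ)]

/-- The positive semidefinite square root of a positive semidefinite matrix
(definition removed from Mathlib; restated with its old meaning). -/
noncomputable def Matrix.PosSemidef.sqrt {n : Type*} [Fintype n] [DecidableEq n]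
    {A : Matrix n n ℝ} (hA : A.PosSemidef) : Matrix n n ℝ :=
  hA.1.eigenvectorUnitary.1 * diagonal ((↑) ∘ (√·) ∘ hA.1.eigenvalues) *
  (star hA.1.eigenvectorUnitary : Matrix n n ℝ)

/-!
Along a segment, `t ↦ D²f(x + t d)[u, u]` has derivative `D³f[d, u, u]`, which by the symmetry of
`D³f` and pseudo self-concordance is at most `R ‖d‖ |D²f[u, u]|` in absolute value. Grönwall's
inequality then gives `|D²f(y)[u, u]| ≤ e^{R ‖y - x⋆‖} |D²f(x⋆)[u, u]|`, and the mean value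
inequality on the ball around `x⋆` through `x₁` and `x₂` bounds `|D²f(x₂)[u, u] - D²f(x₁)[u, u]|`.
With `u = J^{1/2} w` this controls the quadratic form of the symmetric matrix
`J^{1/2} (∇²f(x₂) - ∇²f(x₁)) J^{1/2}`, whose spectral norm is the supremum of its Rayleigh quotient.
-/

open RealInnerProductSpace

section PseudoSelfConcordant

variable {E : Type*} [NormedAddCommGroup E] [NormedSpace ℝ E] {f : E → ℝ}

def PseudoSelfConcordant (R : ℝ) (f : E → ℝ) : Prop :=
  ∀ x u v, |iteratedFDeriv ℝ 3 f x ![u, u, v]| ≤ R * iteratedFDeriv ℝ 2 f x ![u, u] * ‖v‖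

theorem hasFDerivAt_iteratedFDeriv_apply {n : ℕ} {x : E}
    (hf : DifferentiableAt ℝ (iteratedFDeriv ℝ n f) x) (m : Fin n → E) :
    HasFDerivAt (fun y => iteratedFDeriv ℝ n f y m)
      ((ContinuousMultilinearMap.apply ℝ (fun _ => E) ℝ m).comp
        (fderiv ℝ (iteratedFDeriv ℝ n f) x)) x :=
  (ContinuousMultilinearMap.apply ℝ (fun _ => E) ℝ m).hasFDerivAt.comp x hf.hasFDerivAt

theorem fderiv_iteratedFDeriv_apply {n : ℕ} {x : E}
    (hf : DifferentiableAt ℝ (iteratedFDeriv ℝ n f) x) (m : Fin n → E) (v : E) :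
    fderiv ℝ (fun y => iteratedFDeriv ℝ n f y m) x v =
      iteratedFDeriv ℝ (n + 1) f x (Fin.cons v m) := by
  rw [(hasFDerivAt_iteratedFDeriv_apply hf m).fderiv, iteratedFDeriv_succ_apply_left]
  simp

theorem iteratedFDeriv_two_comm (hf : ContDiff ℝ 2 f) (x u v : E) :
    iteratedFDeriv ℝ 2 f x ![u, v] = iteratedFDeriv ℝ 2 f x ![v, u] :=
  IsSymmSndFDerivAt.iteratedFDeriv_cons (hf := hf.contDiffAt.isSymmSndFDerivAt (by simp))

theorem iteratedFDeriv_three_swap_left (hf : ContDiff ℝ 3 f) (x a b c : E) :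
    iteratedFDeriv ℝ 3 f x ![a, b, c] = iteratedFDeriv ℝ 3 f x ![b, a, c] := by
  have hsymm : IsSymmSndFDerivAt ℝ (fderiv ℝ f) x :=
    (hf.fderiv_right (m := 2) (by norm_num)).contDiffAt.isSymmSndFDerivAt (by simp)
  simp only [iteratedFDeriv_succ_apply_right]
  simpa [Fin.init] using congrArg (· c) (hsymm.eq a b)

theorem iteratedFDeriv_three_swap_right (hf : ContDiff ℝ 3 f) (x a b c : E) :
    iteratedFDeriv ℝ 3 f x ![a, b, c] = iteratedFDeriv ℝ 3 f x ![a, c, b] := by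
  have hd : DifferentiableAt ℝ (iteratedFDeriv ℝ 2 f) x :=
    (hf.differentiable_iteratedFDeriv (by norm_num)).differentiableAt
  calc iteratedFDeriv ℝ 3 f x ![a, b, c]
      = fderiv ℝ (fun y => iteratedFDeriv ℝ 2 f y ![b, c]) x a :=
        (fderiv_iteratedFDeriv_apply hd _ a).symm
    _ = fderiv ℝ (fun y => iteratedFDeriv ℝ 2 f y ![c, b]) x a := by
        simp_rw [iteratedFDeriv_two_comm (hf.of_le (by norm_num)) _ b c]
    _ = iteratedFDeriv ℝ 3 f x ![a, c, b] := fderiv_iteratedFDeriv_apply hd _ a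

theorem abs_le_abs_mul_exp_of_abs_deriv_le {g g' : ℝ → ℝ} {K : ℝ}
    (hg : ∀ t ∈ Set.Icc (0 : ℝ) 1, HasDerivAt g (g' t) t)
    (hbound : ∀ t ∈ Set.Ico (0 : ℝ) 1, |g' t| ≤ K * |g t|) :
    |g 1| ≤ |g 0| * Real.exp K := by
  have h := norm_le_gronwallBound_of_norm_deriv_right_le (ε := 0) (a := 0) (b := 1)
    (fun t ht => (hg t ht).continuousAt.continuousWithinAt)
    (fun t ht => (hg t (Set.Ico_subset_Icc_self ht)).hasDerivWithinAt)
    le_rfl (fun t ht => by simpa using hbound t ht) 1 (by simp)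
  simpa [gronwallBound_ε0] using h

theorem hasDerivAt_iteratedFDeriv_apply_add_smul {n : ℕ} {a d : E} {t : ℝ}
    (hf : DifferentiableAt ℝ (iteratedFDeriv ℝ n f) (a + t • d)) (m : Fin n → E) :
    HasDerivAt (fun s : ℝ => iteratedFDeriv ℝ n f (a + s • d) m)
      (iteratedFDeriv ℝ (n + 1) f (a + t • d) (Fin.cons d m)) t := by
  have hline : HasDerivAt (fun s : ℝ => a + s • d) d t := by
    simpa using ((hasDerivAt_id t).smul_const d).const_add a
  exact (hasFDerivAt_iteratedFDeriv_apply hf m).comp_hasDerivAt t hline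

variable {R : ℝ}

theorem PseudoSelfConcordant.abs_iteratedFDeriv_three_le (hR : 0 ≤ R)
    (hf : ContDiff ℝ 3 f) (hsc : PseudoSelfConcordant R f) (x u v : E) :
    |iteratedFDeriv ℝ 3 f x ![v, u, u]| ≤ R * ‖v‖ * |iteratedFDeriv ℝ 2 f x ![u, u]| := by
  rw [iteratedFDeriv_three_swap_left hf, iteratedFDeriv_three_swap_right hf]
  calc |iteratedFDeriv ℝ 3 f x ![u, u, v]|
      ≤ R * iteratedFDeriv ℝ 2 f x ![u, u] * ‖v‖ := hsc x u v
    _ ≤ R * |iteratedFDeriv ℝ 2 f x ![u, u]| * ‖v‖ := by gcongr; exact le_abs_self _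
    _ = R * ‖v‖ * |iteratedFDeriv ℝ 2 f x ![u, u]| := by ring

theorem PseudoSelfConcordant.abs_iteratedFDeriv_two_le_mul_exp (hR : 0 ≤ R)
    (hf : ContDiff ℝ 3 f) (hsc : PseudoSelfConcordant R f) (a b u : E) :
    |iteratedFDeriv ℝ 2 f b ![u, u]| ≤
      |iteratedFDeriv ℝ 2 f a ![u, u]| * Real.exp (R * ‖b - a‖) := by
  have hd : Differentiable ℝ (iteratedFDeriv ℝ 2 f) :=
    hf.differentiable_iteratedFDeriv (by norm_num)
  simpa using abs_le_abs_mul_exp_of_abs_deriv_le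
    (fun t _ => hasDerivAt_iteratedFDeriv_apply_add_smul (a := a) (d := b - a) (hd _) ![u, u])
    (fun t _ => hsc.abs_iteratedFDeriv_three_le hR hf _ u _)

theorem PseudoSelfConcordant.abs_iteratedFDeriv_two_sub_le (hR : 0 ≤ R)
    (hf : ContDiff ℝ 3 f) (hsc : PseudoSelfConcordant R f) (x₁ x₂ xs u : E) :
    |iteratedFDeriv ℝ 2 f x₂ ![u, u] - iteratedFDeriv ℝ 2 f x₁ ![u, u]| ≤
      R * Real.exp (R * max ‖x₁ - xs‖ ‖x₂ - xs‖) * |iteratedFDeriv ℝ 2 f xs ![u, u]| *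
        ‖x₂ - x₁‖ := by
  set r := max ‖x₁ - xs‖ ‖x₂ - xs‖
  have hd : ∀ y, DifferentiableAt ℝ (iteratedFDeriv ℝ 2 f) y :=
    fun y => (hf.differentiable_iteratedFDeriv (by norm_num)).differentiableAt
  refine (Convex.norm_image_sub_le_of_norm_hasFDerivWithin_le (s := Metric.closedBall xs r)
    (fun y _ => (hasFDerivAt_iteratedFDeriv_apply (hd y) ![u, u]).hasFDerivWithinAt)
    (fun y hy => ContinuousLinearMap.opNorm_le_bound _ (by positivity) fun v => ?_)
    (convex_closedBall xs r) (by simp [r, dist_eq_norm]) (by simp [r, dist_eq_norm]))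
  have hyr : ‖y - xs‖ ≤ r := by simpa [dist_eq_norm] using hy
  calc |iteratedFDeriv ℝ 3 f y ![v, u, u]|
      ≤ R * ‖v‖ * |iteratedFDeriv ℝ 2 f y ![u, u]| := hsc.abs_iteratedFDeriv_three_le hR hf y u v
    _ ≤ R * ‖v‖ * (|iteratedFDeriv ℝ 2 f xs ![u, u]| * Real.exp (R * r)) := by
        grw [hsc.abs_iteratedFDeriv_two_le_mul_exp hR hf xs y u, hyr]
    _ = R * Real.exp (R * r) * |iteratedFDeriv ℝ 2 f xs ![u, u]| * ‖v‖ := by ring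

end PseudoSelfConcordant

theorem ContinuousLinearMap.opNorm_le_of_abs_inner_self_le {E : Type*} [NormedAddCommGroup E]
    [InnerProductSpace ℝ E] {T : E →L[ℝ] E} (hT : (T : E →ₗ[ℝ] E).IsSymmetric) {C : ℝ}
    (hC : 0 ≤ C) (h : ∀ x, |⟪x, T x⟫| ≤ C * ‖x‖ ^ 2) : ‖T‖ ≤ C := by
  rw [T.norm_eq_iSup_rayleighQuotient hT]
  refine ciSup_le fun x => ?_
  rcases eq_or_ne x 0 with rfl | hx
  · simpa using hC
  rw [rayleighQuotient, reApplyInnerSelf_apply, abs_div, abs_sq, div_le_iff₀ (by positivity),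
    RCLike.re_to_real, real_inner_comm]
  exact h x

section Matrices

variable {p : ℕ}

theorem Matrix.PosSemidef.isHermitian_sqrt {n : Type*} [Fintype n] [DecidableEq n]
    {A : Matrix n n ℝ} (hA : A.PosSemidef) : hA.sqrt.IsHermitian := by
  unfold Matrix.PosSemidef.sqrt
  rw [star_eq_conjTranspose]
  exact isHermitian_mul_mul_conjTranspose _ (isHermitian_diagonal _)

theorem inner_toEuclideanCLM_of_apply_single
    (B : EuclideanSpace ℝ (Fin p) →L[ℝ] EuclideanSpace ℝ (Fin p) →L[ℝ] ℝ)
    (v w : EuclideanSpace ℝ (Fin p)) :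
    ⟪v, toEuclideanCLM (𝕜 := ℝ)
      (of fun i j => B (EuclideanSpace.single i 1) (EuclideanSpace.single j 1)) w⟫ = B v w := by
  conv_rhs => rw [← (EuclideanSpace.basisFun (Fin p) ℝ).sum_repr v,
    ← (EuclideanSpace.basisFun (Fin p) ℝ).sum_repr w]
  simp only [PiLp.inner_apply, ofLp_toEuclideanCLM, mulVec, dotProduct, of_apply, mul_comm,
    RCLike.inner_apply, Real.ringHom_apply, Finset.mul_sum, EuclideanSpace.basisFun_repr,
    EuclideanSpace.basisFun_apply, map_sum, map_smul, _root_.sum_apply, _root_.smul_apply,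
    smul_eq_mul, mul_left_comm]
  exact Finset.sum_comm

theorem inner_toEuclideanCLM_hessMat (f : EuclideanSpace ℝ (Fin p) → ℝ)
    (x v w : EuclideanSpace ℝ (Fin p)) :
    ⟪v, toEuclideanCLM (𝕜 := ℝ) (hessMat f x) w⟫ = iteratedFDeriv ℝ 2 f x ![v, w] := by
  simp only [hessMat, iteratedFDeriv_two_apply]
  exact inner_toEuclideanCLM_of_apply_single _ v w

theorem isHermitian_hessMat {f : EuclideanSpace ℝ (Fin p) → ℝ} (hf : ContDiff ℝ 2 f)
    (x : EuclideanSpace ℝ (Fin p)) : (hessMat f x).IsHermitian := by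
  ext i j
  exact iteratedFDeriv_two_comm hf x _ _

theorem Matrix.IsHermitian.mul_mul_self {S A : Matrix (Fin p) (Fin p) ℝ} (hS : S.IsHermitian)
    (hA : A.IsHermitian) : (S * A * S).IsHermitian := by
  have h := isHermitian_conjTranspose_mul_mul S hA
  rwa [hS.eq] at h

theorem inner_toEuclideanCLM_mul_mul_self {S : Matrix (Fin p) (Fin p) ℝ} (hS : S.IsHermitian)
    (A : Matrix (Fin p) (Fin p) ℝ) (u : EuclideanSpace ℝ (Fin p)) :
    ⟪u, toEuclideanCLM (𝕜 := ℝ) (S * A * S) u⟫ =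
      ⟪toEuclideanCLM (𝕜 := ℝ) S u, toEuclideanCLM (𝕜 := ℝ) A (toEuclideanCLM (𝕜 := ℝ) S u)⟫ := by
  rw [map_mul, map_mul]
  exact (isSymmetric_toEuclideanLin_iff.mpr hS u _).symm

theorem abs_inner_toEuclideanCLM_self_le (A : Matrix (Fin p) (Fin p) ℝ)
    (u : EuclideanSpace ℝ (Fin p)) :
    |⟪u, toEuclideanCLM (𝕜 := ℝ) A u⟫| ≤ specNorm A * ‖u‖ ^ 2 := by
  calc |⟪u, toEuclideanCLM (𝕜 := ℝ) A u⟫| ≤ ‖u‖ * ‖toEuclideanCLM (𝕜 := ℝ) A u‖ :=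
        abs_real_inner_le_norm _ _
    _ ≤ ‖u‖ * (specNorm A * ‖u‖) := by gcongr; exact ContinuousLinearMap.le_opNorm _ _
    _ = specNorm A * ‖u‖ ^ 2 := by ring

end Matrices

/-- Local Lipschitzness of the normalized Hessian of a pseudo self-concordant function. -/
theorem stmt_6 {p : ℕ} (R : ℝ) (hR : 0 < R) (f : EuclideanSpace ℝ (Fin p) → ℝ)
    (hf : ContDiff ℝ 3 f)
    (hsc : ∀ x u v, |iteratedFDeriv ℝ 3 f x ![u, u, v]| ≤
      R * (iteratedFDeriv ℝ 2 f x ![u, u]) * ‖v‖)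
    (J : Matrix (Fin p) (Fin p) ℝ) (hJ : J.PosSemidef) :
    ∀ x₁ x₂ xs : EuclideanSpace ℝ (Fin p),
      specNorm (hJ.sqrt * (hessMat f x₂ - hessMat f x₁) * hJ.sqrt) ≤
        R * Real.exp (R * max ‖x₁ - xs‖ ‖x₂ - xs‖) *
          specNorm (hJ.sqrt * hessMat f xs * hJ.sqrt) * ‖x₂ - x₁‖ := by
  intro x₁ x₂ xs
  set S := hJ.sqrt
  have hS : S.IsHermitian := hJ.isHermitian_sqrt
  have hquad (x u) : ⟪u, toEuclideanCLM (𝕜 := ℝ) (S * hessMat f x * S) u⟫ =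
      iteratedFDeriv ℝ 2 f x ![toEuclideanCLM (𝕜 := ℝ) S u, toEuclideanCLM (𝕜 := ℝ) S u] := by
    rw [inner_toEuclideanCLM_mul_mul_self hS, inner_toEuclideanCLM_hessMat]
  have hH (x) : (hessMat f x).IsHermitian := isHermitian_hessMat (hf.of_le (by norm_num)) x
  refine ContinuousLinearMap.opNorm_le_of_abs_inner_self_le
    (isSymmetric_toEuclideanLin_iff.mpr (hS.mul_mul_self ((hH x₂).sub (hH x₁))))
    (by unfold specNorm; positivity) fun u => ?_
  rw [mul_sub, sub_mul, map_sub, _root_.sub_apply, inner_sub_right, hquad, hquad]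
  have hpsc : PseudoSelfConcordant R f := hsc
  calc _ ≤ R * Real.exp (R * max ‖x₁ - xs‖ ‖x₂ - xs‖) *
        |iteratedFDeriv ℝ 2 f xs ![toEuclideanCLM (𝕜 := ℝ) S u, toEuclideanCLM (𝕜 := ℝ) S u]| *
          ‖x₂ - x₁‖ := hpsc.abs_iteratedFDeriv_two_sub_le hR.le hf x₁ x₂ xs _
    _ ≤ R * Real.exp (R * max ‖x₁ - xs‖ ‖x₂ - xs‖) *
        (specNorm (S * hessMat f xs * S) * ‖u‖ ^ 2) * ‖x₂ - x₁‖ := by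
      gcongr
      rw [← hquad]
      exact abs_inner_toEuclideanCLM_self_le _ u
    _ = _ := by ring
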